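/- Let q₁, …, q_m ∈ ℝ² (m ≥ 2) be points whose x-coordinates are strictly increasing: (q₁)₁ < (q₂)₁ < … < (q_m)₁ (an x-monotone polygonal chain with edges [q_j, q_{j+1}]). Then there exists Y ∈ ℝ such that for every point p ∈ ℝ² with (q₁)₁ ≤ p₁ ≤ (q_m)₁ and p₂ ≤ Y, and for all indices 1 ≤ i ≤ m and 1 ≤ j ≤ m−1, the segment [p, q_i] intersects the chain edge [q_j, q_{j+1}] only at q_i; that is, [p, q_i] ∩ [q_j, q_{j+1}] ⊆ {q_i}, and this intersection is empty when i ∉ {j, j+1}. In particular, every vertex of the chain is visible from every such point p via a straight segment that crosses no edge of the chain. -/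
import Mathlib


lemma seg_aux_adj (p v w₁ w₂ : ℝ × ℝ) (Ymin Ymax δ W Y : ℝ)
    (hδ : 0 < δ) (hW : 0 < W)
    (hgap : δ ≤ w₂.1 - w₁.1)
    (hy1 : Ymin ≤ w₁.2) (hy1' : w₁.2 ≤ Ymax) (hy2 : Ymin ≤ w₂.2) (hy2' : w₂.2 ≤ Ymax)
    (hpx : |p.1 - v.1| ≤ W) (hpy : p.2 ≤ Y)
    (hYsep : (Ymax - Ymin) * W + δ ≤ δ * (Ymin - Y))
    (hvw : v = w₁ ∨ v = w₂) :
    segment ℝ p v ∩ segment ℝ w₁ w₂ ⊆ {v} := by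
  have hD0 : 0 ≤ Ymax - Ymin := by linarith
  rintro z ⟨⟨t, b, ht0, hb0, htb, hzeq⟩, ⟨a, c, ha0, hc0, hac, hzeq2⟩⟩
  have hz1 : z.1 = t * p.1 + b * v.1 := by
    rw [← hzeq]; simp [Prod.fst_add, Prod.smul_fst, smul_eq_mul]
  have hz2 : z.2 = t * p.2 + b * v.2 := by
    rw [← hzeq]; simp [Prod.snd_add, Prod.smul_snd, smul_eq_mul]
  have he1 : z.1 = a * w₁.1 + c * w₂.1 := by
    rw [← hzeq2]; simp [Prod.fst_add, Prod.smul_fst, smul_eq_mul]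
  have he2 : z.2 = a * w₁.2 + c * w₂.2 := by
    rw [← hzeq2]; simp [Prod.snd_add, Prod.smul_snd, smul_eq_mul]
  have hpx1 : p.1 - v.1 ≤ W := (abs_le.1 hpx).2
  have hpx2 : v.1 - p.1 ≤ W := by have := (abs_le.1 hpx).1; linarith
  have ht : t = 0 := by
    have key : ∃ s : ℝ, 0 ≤ s ∧ s * δ ≤ t * W ∧ t * (Ymin - Y) ≤ s * (Ymax - Ymin) := by
      rcases hvw with hv | hv
      · have hvx : v.1 = w₁.1 := by rw [hv]
        have hvy : v.2 = w₁.2 := by rw [hv]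
        have e1 : c * (w₂.1 - w₁.1) = t * (p.1 - v.1) := by
          linear_combination hz1 - he1 + v.1 * htb - w₁.1 * hac + hvx
        have e2 : t * (v.2 - p.2) = c * (w₁.2 - w₂.2) := by
          linear_combination hz2 - he2 + v.2 * htb - w₁.2 * hac + hvy
        refine ⟨c, hc0, ?_, ?_⟩
        · linarith [mul_le_mul_of_nonneg_left hgap hc0, mul_le_mul_of_nonneg_left hpx1 ht0, e1]
        · have u1 := mul_nonneg ht0 (by linarith : (0:ℝ) ≤ v.2 - p.2 - (Ymin - Y))
          have u2 := mul_nonneg hc0 (by linarith : (0:ℝ) ≤ (Ymax - Ymin) - (w₁.2 - w₂.2))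
          nlinarith [e2, u1, u2]
      · have hvx : v.1 = w₂.1 := by rw [hv]
        have hvy : v.2 = w₂.2 := by rw [hv]
        have e1 : a * (w₂.1 - w₁.1) = t * (v.1 - p.1) := by
          linear_combination he1 - hz1 + w₂.1 * hac - v.1 * htb - hvx
        have e2 : t * (v.2 - p.2) = a * (w₂.2 - w₁.2) := by
          linear_combination hz2 - he2 + v.2 * htb - w₂.2 * hac + hvy
        refine ⟨a, ha0, ?_, ?_⟩
        · linarith [mul_le_mul_of_nonneg_left hgap ha0, mul_le_mul_of_nonneg_left hpx2 ht0, e1]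
        · have u1 := mul_nonneg ht0 (by linarith : (0:ℝ) ≤ v.2 - p.2 - (Ymin - Y))
          have u2 := mul_nonneg ha0 (by linarith : (0:ℝ) ≤ (Ymax - Ymin) - (w₂.2 - w₁.2))
          nlinarith [e2, u1, u2]
    obtain ⟨s, hs0, h1, h2⟩ := key
    have A := mul_le_mul_of_nonneg_left h2 hδ.le
    have B := mul_le_mul_of_nonneg_right h1 hD0
    have C := mul_le_mul_of_nonneg_left hYsep ht0
    have htδ : t * δ ≤ 0 := by linarith [A, B, C]
    by_contra h
    have hlt : 0 < t := lt_of_le_of_ne ht0 (Ne.symm h)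
    linarith [mul_pos hlt hδ]
  have hb1 : b = 1 := by linarith
  have : z = v := by rw [← hzeq, ht, hb1]; simp
  simp [this]


lemma seg_aux_far (p v w₁ w₂ : ℝ × ℝ) (Ymin Ymax δ W Y : ℝ)
    (hδ : 0 < δ) (hW : 0 < W)
    (hy1 : Ymin ≤ w₁.2) (hy1' : w₁.2 ≤ Ymax) (hy2 : Ymin ≤ w₂.2) (hy2' : w₂.2 ≤ Ymax)
    (hv : Ymin ≤ v.2) (hv' : v.2 ≤ Ymax)
    (hpx : |p.1 - v.1| ≤ W) (hpy : p.2 ≤ Y)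
    (hYsep : (Ymax - Ymin) * W + δ ≤ δ * (Ymin - Y))
    (hw : w₁.1 ≤ w₂.1)
    (hfar : v.1 + δ ≤ w₁.1 ∨ w₂.1 + δ ≤ v.1) :
    segment ℝ p v ∩ segment ℝ w₁ w₂ = ∅ := by
  have hD0 : 0 ≤ Ymax - Ymin := by linarith
  rw [Set.eq_empty_iff_forall_notMem]
  rintro z ⟨⟨t, b, ht0, hb0, htb, hzeq⟩, ⟨a, c, ha0, hc0, hac, hzeq2⟩⟩
  have hz1 : z.1 = t * p.1 + b * v.1 := by
    rw [← hzeq]; simp [Prod.fst_add, Prod.smul_fst, smul_eq_mul]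
  have hz2 : z.2 = t * p.2 + b * v.2 := by
    rw [← hzeq]; simp [Prod.snd_add, Prod.smul_snd, smul_eq_mul]
  have he1 : z.1 = a * w₁.1 + c * w₂.1 := by
    rw [← hzeq2]; simp [Prod.fst_add, Prod.smul_fst, smul_eq_mul]
  have he2 : z.2 = a * w₁.2 + c * w₂.2 := by
    rw [← hzeq2]; simp [Prod.snd_add, Prod.smul_snd, smul_eq_mul]
  have hpx1 : p.1 - v.1 ≤ W := (abs_le.1 hpx).2
  have hpx2 : v.1 - p.1 ≤ W := by have := (abs_le.1 hpx).1; linarith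
  -- z.1 lies between w₁.1 and w₂.1
  have id1 : z.1 - w₁.1 = c * (w₂.1 - w₁.1) := by linear_combination he1 + w₁.1 * hac
  have id2 : w₂.1 - z.1 = a * (w₂.1 - w₁.1) := by linear_combination -he1 - w₂.1 * hac
  have hzw1 : w₁.1 ≤ z.1 := by
    linarith [mul_nonneg hc0 (by linarith : (0:ℝ) ≤ w₂.1 - w₁.1)]
  have hzw2 : z.1 ≤ w₂.1 := by
    linarith [mul_nonneg ha0 (by linarith : (0:ℝ) ≤ w₂.1 - w₁.1)]
  -- z.2 ≥ Ymin
  have id3 : z.2 - Ymin = a * (w₁.2 - Ymin) + c * (w₂.2 - Ymin) := by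
    linear_combination he2 + Ymin * hac
  have hzymin : Ymin ≤ z.2 := by
    linarith [mul_nonneg ha0 (by linarith : (0:ℝ) ≤ w₁.2 - Ymin),
      mul_nonneg hc0 (by linarith : (0:ℝ) ≤ w₂.2 - Ymin)]
  -- δ ≤ t * W
  have hδt : δ ≤ t * W := by
    rcases hfar with h | h
    · -- z.1 - v.1 ≥ δ, and z.1 - v.1 = t * (p.1 - v.1) ≤ t * W
      have e : z.1 - v.1 = t * (p.1 - v.1) := by
        linear_combination hz1 + v.1 * htb
      linarith [mul_le_mul_of_nonneg_left hpx1 ht0]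
    · have e : v.1 - z.1 = t * (v.1 - p.1) := by
        linear_combination -hz1 - v.1 * htb
      linarith [mul_le_mul_of_nonneg_left hpx2 ht0]
  have ht_pos : 0 < t := by
    rcases lt_or_ge 0 t with h | h
    · exact h
    · exfalso; nlinarith [mul_nonpos_of_nonpos_of_nonneg h hW.le]
  -- z.2 ≤ t * Y + (1-t) * Ymax, contradiction
  have id4 : t * Y + (1 - t) * Ymax - z.2 = t * (Y - p.2) + b * (Ymax - v.2) := by
    linear_combination -hz2 - Ymax * htb
  have hz2le : z.2 ≤ t * Y + (1 - t) * Ymax := by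
    have u1 := mul_nonneg ht0 (by linarith : (0:ℝ) ≤ Y - p.2)
    have u2 := mul_nonneg hb0 (by linarith : (0:ℝ) ≤ Ymax - v.2)
    linarith [u1, u2]
  -- combine
  have h1 : t * (Ymax - Y) ≤ Ymax - Ymin := by linarith
  have A := mul_le_mul_of_nonneg_left h1 hδ.le
  have B := mul_le_mul_of_nonneg_right hδt hD0
  have C := mul_le_mul_of_nonneg_left hYsep ht0
  have E : t * δ * (Ymax - Ymin) + t * δ ≤ 0 := by linarith [A, B, C]
  have F : 0 ≤ t * δ * (Ymax - Ymin) := mul_nonneg (mul_nonneg ht0 hδ.le) hD0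
  linarith [mul_pos ht_pos hδ]



/-- let `q 0, …, q (m-1)` (`m ≥ 2`) be an x-monotone polygonal chain, i.e. the
x-coordinates of its vertices are strictly increasing.  Then there is a threshold `Y` such
that from every point `p` with `(q 0).1 ≤ p.1 ≤ (q (m-1)).1` and `p.2 ≤ Y`, every segment
`[p, q i]` meets every chain edge `[q j, q (j+1)]` only in `q i`; in particular the
intersection is empty whenever `i ∉ {j, j+1}`.  Thus every vertex of the chain is visible
from every such point `p`. -/
theorem statement_8 {m : ℕ} (hm : 2 ≤ m) (q : Fin m → ℝ × ℝ)
    (hq : StrictMono fun i : Fin m => (q i).1) :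
    ∃ Y : ℝ, ∀ p : ℝ × ℝ,
      (q ⟨0, by omega⟩).1 ≤ p.1 → p.1 ≤ (q ⟨m - 1, by omega⟩).1 → p.2 ≤ Y →
      ∀ (i : Fin m) (j : ℕ) (hj : j + 1 < m),
        segment ℝ p (q i) ∩ segment ℝ (q ⟨j, by omega⟩) (q ⟨j + 1, hj⟩) ⊆ {q i} ∧
        ((i : ℕ) ≠ j → (i : ℕ) ≠ j + 1 →
          segment ℝ p (q i) ∩ segment ℝ (q ⟨j, by omega⟩) (q ⟨j + 1, hj⟩) = ∅) := by
  have hm0 : 0 < m := by omega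
  have hne : (Finset.univ : Finset (Fin m)).Nonempty := ⟨⟨0, hm0⟩, Finset.mem_univ _⟩
  set Ymin := Finset.univ.inf' hne (fun i => (q i).2) with hYmindef
  set Ymax := Finset.univ.sup' hne (fun i => (q i).2) with hYmaxdef
  have hYminle : ∀ i, Ymin ≤ (q i).2 := fun i => Finset.inf'_le _ (Finset.mem_univ i)
  have hYmaxle : ∀ i, (q i).2 ≤ Ymax := fun i => by
    rw [hYmaxdef]; exact Finset.le_sup' (fun i => (q i).2) (Finset.mem_univ i)
  have hDD : Ymin ≤ Ymax := le_trans (hYminle ⟨0, hm0⟩) (hYmaxle ⟨0, hm0⟩)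
  set g : ℕ → ℝ := fun j =>
    if h : j + 1 < m then (q ⟨j + 1, h⟩).1 - (q ⟨j, by omega⟩).1 else 1 with hgdef
  have hrne : (Finset.range (m - 1)).Nonempty := ⟨0, Finset.mem_range.2 (by omega)⟩
  set δ := (Finset.range (m - 1)).inf' hrne g with hδdef
  have hgpos : ∀ j ∈ Finset.range (m - 1), 0 < g j := by
    intro j hjr
    rw [Finset.mem_range] at hjr
    have h : j + 1 < m := by omega
    have hlt : (⟨j, by omega⟩ : Fin m) < ⟨j + 1, h⟩ := by
      rw [Fin.mk_lt_mk]; omega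
    have := hq hlt
    simp only [hgdef, dif_pos h]
    simpa using sub_pos.2 this
  have hδpos : 0 < δ := by
    rw [hδdef, Finset.lt_inf'_iff]
    exact hgpos
  have hδle : ∀ (j : ℕ) (h : j + 1 < m),
      δ ≤ (q ⟨j + 1, h⟩).1 - (q ⟨j, by omega⟩).1 := by
    intro j h
    have hjr : j ∈ Finset.range (m - 1) := Finset.mem_range.2 (by omega)
    have := Finset.inf'_le g hjr
    rw [hgdef] at this
    simp only [dif_pos h] at this
    exact this
  set W := (q ⟨m - 1, by omega⟩).1 - (q ⟨0, hm0⟩).1 with hWdef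
  have hWpos : 0 < W := by
    have : (⟨0, hm0⟩ : Fin m) < ⟨m - 1, by omega⟩ := by rw [Fin.mk_lt_mk]; omega
    exact sub_pos.2 (hq this)
  refine ⟨Ymin - ((Ymax - Ymin) * W + δ) / δ, ?_⟩
  have hYsep : (Ymax - Ymin) * W + δ ≤ δ * (Ymin - (Ymin - ((Ymax - Ymin) * W + δ) / δ)) := by
    rw [sub_sub_cancel, mul_div_cancel₀]
    exact hδpos.ne'
  intro p hp0 hp1 hpY i j hj
  -- bounds on vertex i
  have hi0 : (q ⟨0, hm0⟩).1 ≤ (q i).1 := by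
    have : (⟨0, hm0⟩ : Fin m) ≤ i := by rw [Fin.mk_le_mk]; omega
    exact hq.monotone this
  have hi1 : (q i).1 ≤ (q ⟨m - 1, by omega⟩).1 := by
    have : i ≤ (⟨m - 1, by omega⟩ : Fin m) := by
      rw [Fin.le_def]
      have := i.isLt; simp; omega
    exact hq.monotone this
  have hpx : |p.1 - (q i).1| ≤ W := by
    rw [abs_le]; constructor <;> [skip; skip] <;> rw [hWdef] <;> linarith
  have hgap : δ ≤ (q ⟨j + 1, hj⟩).1 - (q ⟨j, by omega⟩).1 := hδle j hj
  by_cases hij : (i : ℕ) = j ∨ (i : ℕ) = j + 1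
  · have hvw : q i = q ⟨j, by omega⟩ ∨ q i = q ⟨j + 1, hj⟩ := by
      rcases hij with h | h
      · exact Or.inl (congrArg q (Fin.ext h))
      · exact Or.inr (congrArg q (Fin.ext h))
    refine ⟨seg_aux_adj p (q i) _ _ Ymin Ymax δ W _ hδpos hWpos hgap
      (hYminle _) (hYmaxle _) (hYminle _) (hYmaxle _) hpx hpY hYsep hvw, ?_⟩
    intro h1 h2
    rcases hij with h | h
    · exact absurd h h1
    · exact absurd h h2
  · push_neg at hij
    obtain ⟨hne1, hne2⟩ := hij
    have hfar : (q i).1 + δ ≤ (q ⟨j, by omega⟩).1 ∨ (q ⟨j + 1, hj⟩).1 + δ ≤ (q i).1 := by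
      rcases lt_or_gt_of_ne hne1 with h | h
      · -- i < j : q i ≤ q (j-1) and δ ≤ q j - q (j-1)
        left
        have hj1 : (j - 1) + 1 < m := by omega
        have hle := hδle (j - 1) hj1
        have hq1 : (q ⟨(j - 1) + 1, hj1⟩ : ℝ × ℝ) = q ⟨j, by omega⟩ :=
          congrArg q (Fin.ext (by simp; omega))
        rw [hq1] at hle
        have hmono : (q i).1 ≤ (q ⟨j - 1, by omega⟩).1 := by
          have : i ≤ (⟨j - 1, by omega⟩ : Fin m) := by rw [Fin.le_def]; simp; omega
          exact hq.monotone this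
        linarith
      · -- i > j + 1, so i ≥ j + 2
        right
        have hij2 : j + 2 ≤ (i : ℕ) := by omega
        have hj2 : (j + 1) + 1 < m := by have := i.isLt; omega
        have hle := hδle (j + 1) hj2
        have hmono : (q ⟨(j + 1) + 1, hj2⟩).1 ≤ (q i).1 := by
          have : (⟨(j + 1) + 1, hj2⟩ : Fin m) ≤ i := by rw [Fin.le_def]; simp; omega
          exact hq.monotone this
        linarith
    have hw : (q ⟨j, by omega⟩).1 ≤ (q ⟨j + 1, hj⟩).1 := by linarith [hδpos]
    have hemp := seg_aux_far p (q i) (q ⟨j, by omega⟩) (q ⟨j + 1, hj⟩) Ymin Ymax δ W _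
      hδpos hWpos (hYminle _) (hYmaxle _) (hYminle _) (hYmaxle _) (hYminle _) (hYmaxle _)
      hpx hpY hYsep hw hfar
    refine ⟨?_, fun _ _ => hemp⟩
    intro z hz
    exact absurd hz (Set.eq_empty_iff_forall_notMem.mp hemp z)
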